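/- arXiv:1706.04156 — 4 statements merged into one kernel-verified Lean document; each statement's English description precedes it below -/
import Mathlib

section
/- Let Q be a symmetric positive definite matrix in R^{n×n} and P be an n×m real matrix with full column rank. Then the block matrix J = [[-Q, -P], [P^T, 0]] is Hurwitz, i.e., every eigenvalue of J has strictly negative real part. -/
/-!
If `J v = μ v` for a complex vector `v = (x, y) ≠ 0`, then `Re (v* J v) = Re μ ‖v‖²`. The
off-diagonal part `[[0, -P], [Pᵀ, 0]]` of `J` is skew-adjoint and adds nothing to the real part,
so `Re μ ‖v‖² = -Re (x* Q x)`, which is negative as soon as `x ≠ 0`. And `x = 0` is impossible: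
the first block row would give `P y = 0`, hence `y = 0` by full column rank.
-/

open Matrix

/-- A real square matrix is Hurwitz if all of its complex eigenvalues have
strictly negative real part. -/
def IsHurwitz {ι : Type*} [Fintype ι] [DecidableEq ι] (A : Matrix ι ι ℝ) : Prop :=
  ∀ μ ∈ spectrum ℂ (A.map Complex.ofReal), μ.re < 0

open Complex
open scoped ComplexOrder

namespace Matrix

variable {ι κ : Type*}

theorem exists_mulVec_eq_smul_of_mem_spectrum {K : Type*} [Field K] [Fintype ι] [DecidableEq ι]
    {A : Matrix ι ι K} {μ : K} (hμ : μ ∈ spectrum K A) : ∃ v ≠ 0, A *ᵥ v = μ • v := by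
  rw [← spectrum_toLin', ← Module.End.hasEigenvalue_iff_mem_spectrum] at hμ
  obtain ⟨v, hv⟩ := hμ.exists_hasEigenvector
  exact ⟨v, hv.2, by simpa using hv.apply_eq_smul⟩

theorem mulVec_injective_of_rank_eq_card [Fintype κ] {K : Type*} [Field K] {A : Matrix ι κ K}
    (hA : A.rank = Fintype.card κ) : Function.Injective A.mulVec := by
  have hker : Module.finrank K (LinearMap.ker A.mulVecLin) = 0 := by
    have := A.mulVecLin.finrank_range_add_finrank_ker
    rw [Module.finrank_fintype_fun_eq_card, ← rank, hA] at this
    omega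
  rw [← coe_mulVecLin, ← LinearMap.ker_eq_bot, ← Submodule.finrank_eq_zero, hker]

theorem re_map_ofReal_mulVec [Fintype κ] (M : Matrix ι κ ℝ) (y : κ → ℂ) :
    re ∘ (M.map ofReal *ᵥ y) = M *ᵥ (re ∘ y) := by
  ext i
  simp [mulVec, dotProduct, re_sum]

theorem im_map_ofReal_mulVec [Fintype κ] (M : Matrix ι κ ℝ) (y : κ → ℂ) :
    im ∘ (M.map ofReal *ᵥ y) = M *ᵥ (im ∘ y) := by
  ext i
  simp [mulVec, dotProduct, im_sum]

theorem map_ofReal_mulVec_injective [Fintype κ] {M : Matrix ι κ ℝ}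
    (hM : Function.Injective M.mulVec) : Function.Injective (M.map ofReal).mulVec := by
  intro y z h
  have hre : re ∘ y = re ∘ z := hM <| by simp only [← re_map_ofReal_mulVec, h]
  have him : im ∘ y = im ∘ z := hM <| by simp only [← im_map_ofReal_mulVec, h]
  exact funext fun i => Complex.ext (congrFun hre i) (congrFun him i)

theorem re_star_dotProduct_map_ofReal_mulVec [Fintype ι] (M : Matrix ι ι ℝ) (x : ι → ℂ) :
    (star x ⬝ᵥ M.map ofReal *ᵥ x).re =
      (re ∘ x) ⬝ᵥ M *ᵥ (re ∘ x) + (im ∘ x) ⬝ᵥ M *ᵥ (im ∘ x) := by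
  simp only [dotProduct, mulVec, map_apply, Pi.star_apply, Function.comp_apply,
    Finset.mul_sum, re_sum, ← Finset.sum_add_distrib]
  refine Finset.sum_congr rfl fun i _ => Finset.sum_congr rfl fun j _ => ?_
  simp only [mul_re, mul_im, star_def, conj_re, conj_im, ofReal_re, ofReal_im]
  ring

theorem PosDef.re_star_dotProduct_map_ofReal_mulVec_pos [Fintype ι] {Q : Matrix ι ι ℝ}
    (hQ : Q.PosDef) {x : ι → ℂ} (hx : x ≠ 0) : 0 < (star x ⬝ᵥ Q.map ofReal *ᵥ x).re := by
  have hre := hQ.posSemidef.dotProduct_mulVec_nonneg (re ∘ x)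
  have him := hQ.posSemidef.dotProduct_mulVec_nonneg (im ∘ x)
  simp only [star_trivial] at hre him
  rw [re_star_dotProduct_map_ofReal_mulVec]
  by_cases h : re ∘ x = 0
  · have him_ne : im ∘ x ≠ 0 := fun h' =>
      hx <| funext fun i => Complex.ext (congrFun h i) (congrFun h' i)
    simpa [h] using hQ.dotProduct_mulVec_pos him_ne
  · have hre_pos := hQ.dotProduct_mulVec_pos h
    simp only [star_trivial] at hre_pos
    linarith

theorem re_star_dotProduct_fromBlocks_mulVec [Fintype ι] [Fintype κ] {𝕜 : Type*} [RCLike 𝕜]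
    (Q : Matrix ι ι 𝕜) (P : Matrix ι κ 𝕜) (x : ι → 𝕜) (y : κ → 𝕜) :
    RCLike.re (star (x ⊕ᵥ y) ⬝ᵥ fromBlocks (-Q) (-P) Pᴴ 0 *ᵥ (x ⊕ᵥ y)) =
      -RCLike.re (star x ⬝ᵥ Q *ᵥ x) := by
  have hskew : star y ⬝ᵥ Pᴴ *ᵥ x = star (star x ⬝ᵥ P *ᵥ y) := by
    rw [star_dotProduct, star_mulVec, conjTranspose_conjTranspose, ← dotProduct_mulVec]
  simp only [fromBlocks_mulVec, Sum.elim_comp_inl, Sum.elim_comp_inr, zero_mulVec, add_zero,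
    Function.star_sumElim, sumElim_dotProduct_sumElim, hskew, neg_mulVec, dotProduct_add,
    dotProduct_neg, map_add, map_neg, RCLike.star_def, RCLike.conj_re]
  ring

theorem map_ofReal_fromBlocks_neg_neg_transpose_zero (Q : Matrix ι ι ℝ) (P : Matrix ι κ ℝ) :
    (fromBlocks (-Q) (-P) Pᵀ 0).map ofReal =
      fromBlocks (-Q.map ofReal) (-P.map ofReal) (P.map ofReal)ᴴ 0 := by
  ext (i | i) (j | j) <;> simp

end Matrix

theorem block_matrix_hurwitz_general {n m : ℕ}
    (Q : Matrix (Fin n) (Fin n) ℝ) (P : Matrix (Fin n) (Fin m) ℝ)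
    (hQ : Q.PosDef) (hP : P.rank = m) :
    IsHurwitz (fromBlocks (-Q) (-P) Pᵀ 0) := by
  intro μ hμ
  obtain ⟨v, hv0, hv⟩ := exists_mulVec_eq_smul_of_mem_spectrum hμ
  rw [map_ofReal_fromBlocks_neg_neg_transpose_zero] at hv
  obtain ⟨x, y, rfl⟩ : ∃ x y, v = x ⊕ᵥ y := ⟨_, _, (Sum.elim_comp_inl_inr v).symm⟩
  have hx : x ≠ 0 := by
    rintro rfl
    have hPy : P.map ofReal *ᵥ y = 0 := funext fun i => by
      simpa [fromBlocks_mulVec, neg_mulVec] using congrFun hv (Sum.inl i)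
    have hP_inj := map_ofReal_mulVec_injective
      (mulVec_injective_of_rank_eq_card (A := P) (by rw [hP, Fintype.card_fin]))
    have hy : y = 0 := hP_inj (by rw [hPy, mulVec_zero])
    exact hv0 (by rw [hy, Sum.elim_zero_zero])
  have hform := re_star_dotProduct_fromBlocks_mulVec (Q.map ofReal) (P.map ofReal) x y
  rw [hv, dotProduct_smul, smul_eq_mul, RCLike.re_to_complex, RCLike.re_to_complex] at hform
  obtain ⟨hnorm, hreal⟩ := Complex.pos_iff.mp (dotProduct_star_self_pos_iff.mpr hv0)
  rw [mul_re, ← hreal, mul_zero, sub_zero] at hform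
  have hQx := hQ.re_star_dotProduct_map_ofReal_mulVec_pos hx
  exact neg_of_mul_neg_left (by linarith) hnorm.le

theorem block_matrix_hurwitz {n m : ℕ}
    (Q : Matrix (Fin n) (Fin n) ℝ) (P : Matrix (Fin n) (Fin m) ℝ)
    (hQsym : Q.IsSymm) (hQ : Q.PosDef) (hP : P.rank = m) :
    IsHurwitz (fromBlocks (-Q) (-P) Pᵀ 0) :=
  block_matrix_hurwitz_general Q P hQ hP
end

section
/- Let J = [[2 f''(0) K_DD, f'(0) K_DG], [-f'(0) K_DG^T, 0]] where f''(0) < 0, f'(0) ≠ 0, K_DD is symmetric positive definite, and K_DG has full column rank. Then J is Hurwitz. -/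
/-!
If `J = [[A, B], [-Bᴴ, 0]]` has eigenvector `(x, y)` with eigenvalue `μ`, then
`x* A x + (x* B y - conj (x* B y)) = μ (‖x‖² + ‖y‖²)`. The coupling term is purely imaginary,
so `Re μ · (‖x‖² + ‖y‖²) = Re (x* A x)`, which is negative once `x ≠ 0`. And `x = 0` is
impossible: the first block row would give `B y = 0`, hence `y = 0` by injectivity of `B`.
-/

open Matrix

open Complex ComplexOrder

section

variable {ι κ : Type*} [Fintype ι] [Fintype κ]

theorem Matrix.mulVec_injective_of_rank_eq_card_s6 {m K : Type*} [Field K] {B : Matrix m κ K}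
    (h : B.rank = Fintype.card κ) : Function.Injective B.mulVec := by
  have hdim := B.mulVecLin.finrank_range_add_finrank_ker
  rw [Module.finrank_fintype_fun_eq_card, ← Matrix.rank, h] at hdim
  have hker : LinearMap.ker B.mulVecLin = ⊥ := Submodule.finrank_eq_zero.mp (by omega)
  exact LinearMap.ker_eq_bot.mp hker

theorem Matrix.mulVec_map_ofReal_injective {m : Type*} {B : Matrix m κ ℝ}
    (hB : Function.Injective B.mulVec) : Function.Injective (B.map ofReal).mulVec := by
  have hre (y : κ → ℂ) : (fun i ↦ ((B.map ofReal *ᵥ y) i).re) = B *ᵥ fun j ↦ (y j).re := by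
    ext i; simp [mulVec, dotProduct, re_sum]
  have him (y : κ → ℂ) : (fun i ↦ ((B.map ofReal *ᵥ y) i).im) = B *ᵥ fun j ↦ (y j).im := by
    ext i; simp [mulVec, dotProduct, im_sum]
  intro y y' h
  have h_re := hB ((hre y).symm.trans (h ▸ hre y'))
  have h_im := hB ((him y).symm.trans (h ▸ him y'))
  exact funext fun j ↦ Complex.ext (congrFun h_re j) (congrFun h_im j)

theorem re_star_dotProduct_map_ofReal_mulVec (M : Matrix ι ι ℝ) (x : ι → ℂ) :
    (star x ⬝ᵥ M.map ofReal *ᵥ x).re =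
      (fun i ↦ (x i).re) ⬝ᵥ M *ᵥ (fun i ↦ (x i).re) +
        (fun i ↦ (x i).im) ⬝ᵥ M *ᵥ (fun i ↦ (x i).im) := by
  simp only [dotProduct, mulVec, Finset.mul_sum, re_sum, ← Finset.sum_add_distrib]
  refine Finset.sum_congr rfl fun i _ ↦ Finset.sum_congr rfl fun j _ ↦ ?_
  simp only [Pi.star_apply, map_apply, star_def, mul_re, mul_im, conj_re, conj_im, ofReal_re,
    ofReal_im]
  ring

theorem Matrix.PosDef.re_star_dotProduct_map_ofReal_mulVec_pos_s6 {M : Matrix ι ι ℝ}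
    (hM : M.PosDef) {x : ι → ℂ} (hx : x ≠ 0) : 0 < (star x ⬝ᵥ M.map ofReal *ᵥ x).re := by
  have hparts : (fun i ↦ (x i).re) ≠ 0 ∨ (fun i ↦ (x i).im) ≠ 0 := by
    by_contra! h
    exact hx (funext fun i ↦ Complex.ext (congrFun h.1 i) (congrFun h.2 i))
  have hpos := fun (v : ι → ℝ) (hv : v ≠ 0) ↦ by simpa using hM.dotProduct_mulVec_pos hv
  have hnonneg := fun (v : ι → ℝ) ↦ by simpa using hM.posSemidef.dotProduct_mulVec_nonneg v
  rw [re_star_dotProduct_map_ofReal_mulVec]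
  rcases hparts with h | h
  · exact add_pos_of_pos_of_nonneg (hpos _ h) (hnonneg _)
  · exact add_pos_of_nonneg_of_pos (hnonneg _) (hpos _ h)

variable [DecidableEq ι] [DecidableEq κ]

theorem re_lt_zero_of_mem_spectrum_fromBlocks {A : Matrix ι ι ℂ} {B : Matrix ι κ ℂ}
    (hA : ∀ x ≠ 0, (star x ⬝ᵥ A *ᵥ x).re < 0) (hB : Function.Injective B.mulVec)
    {μ : ℂ} (hμ : μ ∈ spectrum ℂ (fromBlocks A B (-Bᴴ) 0)) : μ.re < 0 := by
  rw [← spectrum_toLin'] at hμ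
  obtain ⟨v, hv⟩ := (Module.End.HasEigenvalue.of_mem_spectrum hμ).exists_hasEigenvector
  have hJv := hv.apply_eq_smul
  rw [toLin'_apply, fromBlocks_mulVec] at hJv
  set x := v ∘ Sum.inl
  set y := v ∘ Sum.inr
  have hx : A *ᵥ x + B *ᵥ y = μ • x := by
    ext i; simpa [x] using congrFun hJv (Sum.inl i)
  have hy : -Bᴴ *ᵥ x = μ • y := by
    ext j; simpa [y] using congrFun hJv (Sum.inr j)
  have hx0 : x ≠ 0 := by
    intro hx0
    have hy0 : y = 0 := hB (by simpa [hx0] using hx)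
    exact hv.2 (by ext (i | j); exacts [congrFun hx0 i, congrFun hy0 j])
  have hBy : star y ⬝ᵥ Bᴴ *ᵥ x = star (star x ⬝ᵥ B *ᵥ y) := by
    rw [star_dotProduct, star_mulVec, conjTranspose_conjTranspose, dotProduct_mulVec]
  have hquad : star x ⬝ᵥ A *ᵥ x + (star x ⬝ᵥ B *ᵥ y - star (star x ⬝ᵥ B *ᵥ y)) =
      μ * (star x ⬝ᵥ x + star y ⬝ᵥ y) := by
    have hx' := congrArg (star x ⬝ᵥ ·) hx
    have hy' := congrArg (star y ⬝ᵥ ·) hy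
    simp only [dotProduct_add, neg_mulVec, dotProduct_neg, dotProduct_smul, smul_eq_mul,
      hBy] at hx' hy'
    linear_combination hx' + hy'
  have hnorm : 0 < star x ⬝ᵥ x + star y ⬝ᵥ y :=
    add_pos_of_pos_of_nonneg (dotProduct_star_self_pos_iff.mpr hx0)
      (dotProduct_star_self_nonneg y)
  rw [Complex.pos_iff] at hnorm
  have hre := congrArg Complex.re hquad
  rw [mul_re, ← hnorm.2, mul_zero, sub_zero, add_re, sub_re, star_def, conj_re, sub_self,
    add_zero] at hre
  exact neg_of_mul_neg_left (hre ▸ hA x hx0) hnorm.1.le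

theorem isHurwitz_fromBlocks_neg_transpose {A : Matrix ι ι ℝ} {B : Matrix ι κ ℝ}
    (hA : (-A).PosDef) (hB : Function.Injective B.mulVec) :
    IsHurwitz (fromBlocks A B (-Bᵀ) 0) := by
  intro μ hμ
  have hmap : (fromBlocks A B (-Bᵀ) 0).map ofReal =
      fromBlocks (A.map ofReal) (B.map ofReal) (-(B.map ofReal)ᴴ) 0 := by
    rw [fromBlocks_map, Matrix.map_neg _ ofReal_neg,
      ← conjTranspose_map _ (fun _ ↦ (conj_ofReal _).symm),
      conjTranspose_eq_transpose_of_trivial, Matrix.map_zero _ ofReal_zero]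
  rw [hmap] at hμ
  refine re_lt_zero_of_mem_spectrum_fromBlocks (fun x hx ↦ ?_)
    (mulVec_map_ofReal_injective hB) hμ
  simpa [Matrix.map_neg _ ofReal_neg, neg_mulVec] using
    hA.re_star_dotProduct_map_ofReal_mulVec_pos_s6 hx

end

theorem gan_jacobian_hurwitz_general {n m : ℕ} (f'0 f''0 : ℝ)
    (hf'' : f''0 < 0) (hf' : f'0 ≠ 0)
    (K_DD : Matrix (Fin n) (Fin n) ℝ) (hpd : K_DD.PosDef)
    (K_DG : Matrix (Fin n) (Fin m) ℝ) (hr : K_DG.rank = m) :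
    IsHurwitz (fromBlocks ((2 * f''0) • K_DD) (f'0 • K_DG) ((-f'0) • K_DGᵀ) 0) := by
  have hA : (-((2 * f''0) • K_DD)).PosDef := by
    rw [← neg_smul]
    exact hpd.smul (by linarith)
  have hB : Function.Injective (f'0 • K_DG).mulVec := fun a b hab ↦
    mulVec_injective_of_rank_eq_card_s6 (by simpa using hr)
      (smul_right_injective _ hf' (by simpa only [smul_mulVec] using hab))
  rw [neg_smul, ← transpose_smul]
  exact isHurwitz_fromBlocks_neg_transpose hA hB

theorem gan_jacobian_hurwitz {n m : ℕ} (f'0 f''0 : ℝ)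
    (hf'' : f''0 < 0) (hf' : f'0 ≠ 0)
    (K_DD : Matrix (Fin n) (Fin n) ℝ) (hsym : K_DD.IsSymm) (hpd : K_DD.PosDef)
    (K_DG : Matrix (Fin n) (Fin m) ℝ) (hr : K_DG.rank = m) :
    IsHurwitz (fromBlocks ((2 * f''0) • K_DD) (f'0 • K_DG) ((-f'0) • K_DGᵀ) 0) :=
  gan_jacobian_hurwitz_general f'0 f''0 hf'' hf' K_DD hpd K_DG hr
end

section
/- Let Q ∈ R^{n×n} be symmetric positive definite and P ∈ R^{n×m} have full column rank, and let J = [[-Q, -P],[P^T, 0]]. Then for any eigenvalue λ of J with Im(λ) ≠ 0 and eigenvector (u, v) (u ∈ C^n, v ∈ C^m), we have u ≠ 0 and Re(λ) = -(u* Q u)/(u* u + v* v). -/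
open Matrix

theorem complex_eigenvalue_rayleigh {n m : ℕ}
    (Q : Matrix (Fin n) (Fin n) ℝ) (hQsym : Q.IsSymm) (hQ : Q.PosDef)
    (P : Matrix (Fin n) (Fin m) ℝ) (hP : P.rank = m)
    (lam : ℂ) (u : Fin n → ℂ) (v : Fin m → ℂ)
    (huv : Sum.elim u v ≠ 0)
    (heig : ((fromBlocks (-Q) (-P) Pᵀ 0).map Complex.ofReal).mulVec (Sum.elim u v)
      = lam • Sum.elim u v)
    (him : lam.im ≠ 0) :
    u ≠ 0 ∧
    lam.re = -(star u ⬝ᵥ (Q.map Complex.ofReal).mulVec u).re /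
      (∑ i, Complex.normSq (u i) + ∑ j, Complex.normSq (v j)) := by
  have hmap : (fromBlocks (-Q) (-P) Pᵀ 0).map Complex.ofReal
      = fromBlocks ((-Q).map Complex.ofReal) ((-P).map Complex.ofReal)
          (Pᵀ.map Complex.ofReal) ((0 : Matrix (Fin m) (Fin m) ℝ).map Complex.ofReal) :=
    fromBlocks_map _ _ _ _ _
  rw [hmap, fromBlocks_mulVec] at heig
  have eq1 : ((-Q).map Complex.ofReal).mulVec u + ((-P).map Complex.ofReal).mulVec v
      = lam • u := by
    funext i
    have := congrFun heig (Sum.inl i)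
    simpa using this
  have eq2 : (Pᵀ.map Complex.ofReal).mulVec u = lam • v := by
    funext j
    have := congrFun heig (Sum.inr j)
    simpa using this
  have hlam : lam ≠ 0 := fun h => him (by simp [h])
  have hu : u ≠ 0 := by
    intro h
    apply huv
    have hv : v = 0 := by
      have h2 := eq2
      rw [h, Matrix.mulVec_zero] at h2
      rcases smul_eq_zero.mp h2.symm with h' | h'
      · exact absurd h' hlam
      · exact h'
    funext i; cases i <;> simp [h, hv]
  refine ⟨hu, ?_⟩
  set a := star u ⬝ᵥ (Q.map Complex.ofReal).mulVec u with ha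
  set b := star u ⬝ᵥ (P.map Complex.ofReal).mulVec v with hb
  have hnQ : (-Q).map Complex.ofReal = -(Q.map Complex.ofReal) := by
    ext i j; simp
  have hnP : (-P).map Complex.ofReal = -(P.map Complex.ofReal) := by
    ext i j; simp
  have h1 : -a + -b = lam * (star u ⬝ᵥ u) := by
    have := congrArg (fun x => star u ⬝ᵥ x) eq1
    simpa [hnQ, hnP, Matrix.neg_mulVec, dotProduct_add, dotProduct_neg, dotProduct_smul,
      smul_eq_mul] using this
  have h2 : star v ⬝ᵥ (Pᵀ.map Complex.ofReal).mulVec u = lam * (star v ⬝ᵥ v) := by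
    rw [eq2]; simp [dotProduct_smul, smul_eq_mul]
  have hc : star v ⬝ᵥ (Pᵀ.map Complex.ofReal).mulVec u = starRingEnd ℂ b := by
    rw [hb]
    simp only [dotProduct, mulVec, Matrix.map_apply, transpose_apply, Pi.star_apply,
      Complex.star_def, map_sum, _root_.map_mul, Complex.conj_conj, Complex.conj_ofReal,
      Finset.mul_sum]
    rw [Finset.sum_comm]
    exact Finset.sum_congr rfl fun i _ => Finset.sum_congr rfl fun j _ => by ring
  -- main complex identity
  have main : -a + -b + starRingEnd ℂ b = lam * (star u ⬝ᵥ u + star v ⬝ᵥ v) := by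
    rw [mul_add, ← h1, ← h2, hc]
  have hre_u : (star u ⬝ᵥ u).re = ∑ i, Complex.normSq (u i) := by
    simp [dotProduct, Complex.re_sum, Complex.normSq_apply, Complex.mul_re]
  have him_u : (star u ⬝ᵥ u).im = 0 := by
    simp [dotProduct, Complex.im_sum, Complex.mul_im, mul_comm]
  have hre_v : (star v ⬝ᵥ v).re = ∑ j, Complex.normSq (v j) := by
    simp [dotProduct, Complex.re_sum, Complex.normSq_apply, Complex.mul_re]
  have him_v : (star v ⬝ᵥ v).im = 0 := by
    simp [dotProduct, Complex.im_sum, Complex.mul_im, mul_comm]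
  have hmain_re := congrArg Complex.re main
  simp only [Complex.add_re, Complex.neg_re, Complex.mul_re, Complex.add_im,
    Complex.conj_re, hre_u, hre_v, him_u, him_v] at hmain_re
  -- hmain_re : -a.re - b.re + b.re = lam.re * (Du + Dv) - lam.im * 0
  have hD : (0:ℝ) < ∑ i, Complex.normSq (u i) + ∑ j, Complex.normSq (v j) := by
    have h1' : 0 < ∑ i, Complex.normSq (u i) := by
      obtain ⟨i, hi⟩ : ∃ i, u i ≠ 0 := by
        by_contra hcon
        push_neg at hcon
        exact hu (funext hcon)
      exact Finset.sum_pos' (fun j _ => Complex.normSq_nonneg _)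
        ⟨i, Finset.mem_univ i, Complex.normSq_pos.mpr hi⟩
    have h2' : 0 ≤ ∑ j, Complex.normSq (v j) :=
      Finset.sum_nonneg fun j _ => Complex.normSq_nonneg _
    linarith
  field_simp
  linarith [hmain_re]
end

section
/- Let p > 0 and η > 0. Every eigenvalue λ of the 2×2 matrix [[0, p],[-p, -2ηp²]] satisfies: if λ is real then λ ≤ -2ηp²/(4η²p² + 1), and if λ is complex (non-real) then Re(λ) = -ηp². -/
open Matrix

theorem scalar_regularized_wgan_eigenvalues (p η : ℝ) (hp : 0 < p) (hη : 0 < η)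
    (lam : ℂ)
    (h : lam ∈ spectrum ℂ ((!![0, p; -p, -2 * η * p ^ 2]).map Complex.ofReal)) :
    (lam.im = 0 → lam.re ≤ -2 * η * p ^ 2 / (4 * η ^ 2 * p ^ 2 + 1)) ∧
    (lam.im ≠ 0 → lam.re = -η * p ^ 2) := by
  rw [spectrum.mem_iff] at h
  rw [Matrix.isUnit_iff_isUnit_det] at h
  rw [isUnit_iff_ne_zero, not_not] at h
  have hdet : lam ^ 2 + 2 * η * p ^ 2 * lam + p ^ 2 = 0 := by
    rw [Matrix.det_fin_two] at h
    simp [Matrix.algebraMap_eq_diagonal, Matrix.map_apply] at h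
    ring_nf at h ⊢
    linear_combination h
  have hre := congrArg Complex.re hdet
  have him := congrArg Complex.im hdet
  simp [Complex.add_re, Complex.add_im, Complex.mul_re, Complex.mul_im, pow_two] at hre him
  constructor
  · intro h0
    rw [h0] at hre
    simp at hre
    set x := lam.re with hx
    have hpos : (0:ℝ) < 4 * η ^ 2 * p ^ 2 + 1 := by positivity
    rw [le_div_iff₀ hpos]
    nlinarith [sq_nonneg (2*η*p*x + p), mul_pos hη (mul_pos hp hp), sq_nonneg x, sq_nonneg (η*p*x)]
  · intro h0
    have : lam.re + lam.re + 2 * η * p ^ 2 = 0 := by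
      have h2 : lam.im * (lam.re + lam.re + 2 * η * p ^ 2) = 0 := by ring_nf; ring_nf at him; linarith
      rcases mul_eq_zero.mp h2 with h3 | h3
      · exact absurd h3 h0
      · exact h3
    linarith
end
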